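/- arXiv:1604.06728 — 3 statements merged into one kernel-verified Lean document; each statement's English description precedes it below -/
import Mathlib

section
/- Let (a_1,…,a_n) be the d-vector of a weighted non-crossing family. Then for any three diagonals T_i, T_j, T_k of the triangulation forming a triangle, if a_i, a_j, a_k are all positive and each is strictly less than the sum of the other two, then a_i + a_j + a_k is even. -/
open scoped Classical

noncomputable section

/-- The counterclockwise arc length from `a` to `b` on the cyclically ordered vertex
set `ℤ/N` of a convex `N`-gon. -/
def arc {N : ℕ} [NeZero N] (a b : ZMod N) : ℕ := (b - a).val

/-- `D` is a diagonal of the convex `N`-gon: an unordered pair of distinct,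
non-adjacent vertices. -/
def IsDiagonal {N : ℕ} [NeZero N] (D : Sym2 (ZMod N)) : Prop :=
  ∃ a b : ZMod N, D = s(a, b) ∧ a ≠ b ∧ b - a ≠ 1 ∧ a - b ≠ 1

/-- Two chords of the convex `N`-gon cross: their endpoints strictly interleave in the
cyclic order (equivalently, the open segments meet in the interior). -/
def Crosses {N : ℕ} [NeZero N] (D E : Sym2 (ZMod N)) : Prop :=
  ∃ a b c d : ZMod N, D = s(a, b) ∧ E = s(c, d) ∧
    0 < arc a c ∧ arc a c < arc a b ∧ arc a b < arc a d

/-- The intersection number: `1` if the diagonals cross, `-1` if they coincide,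
`0` otherwise. -/
def inum {N : ℕ} [NeZero N] (D E : Sym2 (ZMod N)) : ℤ :=
  if Crosses D E then 1 else if D = E then -1 else 0

/-- A weighted non-crossing family, encoded by its multiplicity function `f`:
the support of `f` consists of pairwise distinct, pairwise non-crossing diagonals,
each with positive integer multiplicity. -/
def IsFamily {N : ℕ} [NeZero N] (f : Sym2 (ZMod N) → ℕ) : Prop :=
  (∀ D, f D ≠ 0 → IsDiagonal D) ∧ (∀ D E, f D ≠ 0 → f E ≠ 0 → ¬ Crosses D E)

/-- `T` is a triangulation of the `(n+3)`-gon: a maximal set of `n` pairwise distinct,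
pairwise non-crossing diagonals. -/
def IsTriangulation {n : ℕ} (T : Fin n → Sym2 (ZMod (n + 3))) : Prop :=
  (∀ i, IsDiagonal (T i)) ∧ Function.Injective T ∧
  (∀ i j, ¬ Crosses (T i) (T j)) ∧
  (∀ D, IsDiagonal D → (∀ i, ¬ Crosses D (T i)) → ∃ i, T i = D)

/-- The `d`-vector of a weighted non-crossing family with respect to `T`:
`a_i = Σ_D f(D) · i(D, T_i)`. -/
def dvec {n : ℕ} (T : Fin n → Sym2 (ZMod (n + 3))) (f : Sym2 (ZMod (n + 3)) → ℕ) :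
    Fin n → ℤ :=
  fun i => ∑ D : Sym2 (ZMod (n + 3)), (f D : ℤ) * inum D (T i)

/-- The diagonals `T i, T j, T k` form a triangle: they pairwise share an endpoint and
have three distinct vertices in total. -/
def FormTriangle {n : ℕ} (T : Fin n → Sym2 (ZMod (n + 3))) (i j k : Fin n) : Prop :=
  ∃ u v w : ZMod (n + 3), u ≠ v ∧ v ≠ w ∧ w ≠ u ∧
    T i = s(u, v) ∧ T j = s(v, w) ∧ T k = s(w, u)

/-- The parity condition on an integer vector `a`: for every triangle `T_i, T_j, T_k`
of the triangulation, if `a_i, a_j, a_k` are positive and each is strictly less than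
the sum of the other two, then `a_i + a_j + a_k` is even. -/
def ParityCond {n : ℕ} (T : Fin n → Sym2 (ZMod (n + 3))) (a : Fin n → ℤ) : Prop :=
  ∀ i j k, FormTriangle T i j k → 0 < a i → 0 < a j → 0 < a k →
    a i < a j + a k → a j < a i + a k → a k < a i + a j → Even (a i + a j + a k)

/-! A diagonal of the family crosses zero or two sides of the triangle `uvw`, unless it ends at
a vertex, say `u`, and crosses the opposite side `vw`. Since no diagonal of the family crosses it,
each of them crosses `vw` whenever it crosses `uv` or `wu`, and never crosses both; so
`a(vw) > a(uv) + a(wu)` and the triangle inequality fails. Otherwise summing over the family gives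
an even total. A side of positive coordinate is not in the family (a diagonal of the family has
coordinate `-f(D) ≤ 0`), so its coordinate is its weighted number of crossings. The geometric facts
become linear arithmetic once the polygon is cut open at vertex `0`. -/

namespace DvecParity

section Polygon

variable {N : ℕ} [NeZero N]

lemma val_sub_of_lt {a b : ZMod N} (h : a.val < b.val) : (a - b).val = a.val + N - b.val := by
  have : a - b = ((a.val + N - b.val : ℕ) : ZMod N) := by
    rw [Nat.cast_sub (by have := ZMod.val_lt b; omega), Nat.cast_add, ZMod.natCast_self,
      ZMod.natCast_zmod_val, ZMod.natCast_zmod_val, add_zero]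
  rw [this, ZMod.val_natCast, Nat.mod_eq_of_lt (by have := ZMod.val_lt b; omega)]

lemma arc_eq_ite (a b : ZMod N) :
    arc a b = if a.val ≤ b.val then b.val - a.val else b.val + N - a.val := by
  unfold arc
  split_ifs with h
  · exact ZMod.val_sub h
  · exact val_sub_of_lt (not_le.mp h)

def LineCross (a b c d : ℕ) : Prop :=
  (min a b < c ∧ c < max a b ∧ (d < min a b ∨ max a b < d)) ∨
  (min a b < d ∧ d < max a b ∧ (c < min a b ∨ max a b < c))

lemma crosses_iff_lineCross {a b c d : ZMod N} :
    Crosses s(a, b) s(c, d) ↔ LineCross a.val b.val c.val d.val := by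
  have ha := ZMod.val_lt a; have hb := ZMod.val_lt b
  have hc := ZMod.val_lt c; have hd := ZMod.val_lt d
  constructor
  · rintro ⟨a', b', c', d', hD, hE, h⟩
    simp only [arc_eq_ite] at h
    rw [Sym2.eq_iff] at hD hE
    unfold LineCross
    rcases hD with ⟨rfl, rfl⟩ | ⟨rfl, rfl⟩ <;> rcases hE with ⟨rfl, rfl⟩ | ⟨rfl, rfl⟩ <;>
      split_ifs at h <;> omega
  · intro h
    unfold LineCross at h
    rcases le_total a.val b.val with hab | hab <;> rcases h with h | h
    · exact ⟨a, b, c, d, rfl, rfl, by simp only [arc_eq_ite]; split_ifs <;> omega⟩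
    · exact ⟨a, b, d, c, rfl, Sym2.eq_swap, by simp only [arc_eq_ite]; split_ifs <;> omega⟩
    · exact ⟨b, a, c, d, Sym2.eq_swap, rfl, by simp only [arc_eq_ite]; split_ifs <;> omega⟩
    · exact ⟨b, a, d, c, Sym2.eq_swap, Sym2.eq_swap, by simp only [arc_eq_ite]; split_ifs <;> omega⟩

def crossInd (D E : Sym2 (ZMod N)) : ℤ := if Crosses D E then 1 else 0

lemma not_crosses_of_mem {x : ZMod N} {D E : Sym2 (ZMod N)} (hD : x ∈ D) (hE : x ∈ E) :
    ¬ Crosses D E := by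
  induction D using Sym2.ind with | _ a b =>
  induction E using Sym2.ind with | _ c d =>
  simp only [Sym2.mem_iff] at hD hE
  rw [crosses_iff_lineCross, LineCross]
  rcases hD with rfl | rfl <;> rcases hE with h | h <;> subst h <;> omega

lemma crossInd_add_le_of_crosses {u v w x : ZMod N} {D : Sym2 (ZMod N)}
    (hx : Crosses s(u, x) s(v, w)) (hD : ¬ Crosses s(u, x) D) :
    crossInd D s(u, v) + crossInd D s(w, u) ≤ crossInd D s(v, w) := by
  induction D using Sym2.ind with | _ a b =>
  simp only [crossInd, crosses_iff_lineCross, LineCross] at *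
  split_ifs <;> omega

lemma even_crossInd_add {u v w : ZMod N} {D : Sym2 (ZMod N)}
    (hu : u ∈ D → ¬ Crosses D s(v, w)) (hv : v ∈ D → ¬ Crosses D s(w, u))
    (hw : w ∈ D → ¬ Crosses D s(u, v)) :
    Even (crossInd D s(u, v) + crossInd D s(v, w) + crossInd D s(w, u)) := by
  induction D using Sym2.ind with | _ a b =>
  simp only [crossInd, Sym2.mem_iff, ← (ZMod.val_injective N).eq_iff, crosses_iff_lineCross,
    LineCross] at *
  split_ifs <;> first | decide | omega

variable (f : Sym2 (ZMod N) → ℕ)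

def crossSum (E : Sym2 (ZMod N)) : ℤ := ∑ D, (f D : ℤ) * crossInd D E

lemma sum_inum_eq_neg {E : Sym2 (ZMod N)} (hE : ∀ D, f D ≠ 0 → ¬ Crosses D E) :
    ∑ D, (f D : ℤ) * inum D E = -(f E : ℤ) := by
  rw [Finset.sum_eq_single_of_mem E (Finset.mem_univ E)]
  · induction E using Sym2.ind with | _ a b =>
    rw [inum, if_neg (not_crosses_of_mem (Sym2.mem_mk_left a b) (Sym2.mem_mk_left a b)),
      if_pos rfl, mul_neg_one]
  · intro D _ hDE
    by_cases hfD : f D = 0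
    · rw [hfD, Nat.cast_zero, zero_mul]
    · rw [inum, if_neg (hE D hfD), if_neg hDE, mul_zero]

lemma sum_inum_eq_crossSum {E : Sym2 (ZMod N)} (hE : f E = 0) :
    ∑ D, (f D : ℤ) * inum D E = crossSum f E := by
  refine Finset.sum_congr rfl fun D _ => ?_
  by_cases hDE : D = E
  · rw [hDE, hE, Nat.cast_zero, zero_mul, zero_mul]
  · rw [inum, crossInd, if_neg hDE]

variable {f}

lemma crossSum_add_lt_of_crosses (hf : ∀ D E, f D ≠ 0 → f E ≠ 0 → ¬ Crosses D E)
    {u v w x : ZMod N} (hfx : f s(u, x) ≠ 0) (hx : Crosses s(u, x) s(v, w)) :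
    crossSum f s(u, v) + crossSum f s(w, u) < crossSum f s(v, w) := by
  suffices 0 < ∑ D, (f D : ℤ) * (crossInd D s(v, w) - crossInd D s(u, v) - crossInd D s(w, u)) by
    simp only [mul_sub, Finset.sum_sub_distrib] at this
    rw [crossSum, crossSum, crossSum]
    linarith
  refine Finset.sum_pos' (fun D _ => ?_) ⟨s(u, x), Finset.mem_univ _, ?_⟩
  · by_cases hfD : f D = 0
    · rw [hfD, Nat.cast_zero, zero_mul]
    · have := crossInd_add_le_of_crosses hx (hf _ _ hfx hfD)
      exact mul_nonneg (Nat.cast_nonneg _) (by linarith)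
  · have hux : u ∈ s(u, x) := Sym2.mem_mk_left u x
    rw [crossInd, crossInd, crossInd, if_pos hx,
      if_neg (not_crosses_of_mem hux (Sym2.mem_mk_left u v)),
      if_neg (not_crosses_of_mem hux (Sym2.mem_mk_right w u))]
    exact mul_pos (Nat.cast_pos.mpr (Nat.pos_of_ne_zero hfx)) one_pos

lemma even_crossSum_add {u v w : ZMod N}
    (hu : ∀ D, f D ≠ 0 → u ∈ D → ¬ Crosses D s(v, w))
    (hv : ∀ D, f D ≠ 0 → v ∈ D → ¬ Crosses D s(w, u))
    (hw : ∀ D, f D ≠ 0 → w ∈ D → ¬ Crosses D s(u, v)) :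
    Even (crossSum f s(u, v) + crossSum f s(v, w) + crossSum f s(w, u)) := by
  simp only [crossSum, ← Finset.sum_add_distrib, ← mul_add]
  refine Finset.even_sum _ fun D _ => ?_
  by_cases hfD : f D = 0
  · rw [hfD, Nat.cast_zero, zero_mul]
    exact Even.zero
  · exact (even_crossInd_add (hu D hfD) (hv D hfD) (hw D hfD)).mul_left _

lemma even_crossSum_add_of_lt (hf : ∀ D E, f D ≠ 0 → f E ≠ 0 → ¬ Crosses D E) {u v w : ZMod N}
    (huv : crossSum f s(u, v) < crossSum f s(v, w) + crossSum f s(w, u))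
    (hvw : crossSum f s(v, w) < crossSum f s(u, v) + crossSum f s(w, u))
    (hwu : crossSum f s(w, u) < crossSum f s(u, v) + crossSum f s(v, w)) :
    Even (crossSum f s(u, v) + crossSum f s(v, w) + crossSum f s(w, u)) := by
  refine even_crossSum_add ?_ ?_ ?_ <;> rintro D hfD hD hcross <;>
    obtain ⟨x, rfl⟩ := Sym2.mem_iff_exists.mp hD
  · linarith [crossSum_add_lt_of_crosses hf hfD hcross]
  · linarith [crossSum_add_lt_of_crosses hf hfD hcross]
  · linarith [crossSum_add_lt_of_crosses hf hfD hcross]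

end Polygon

lemma dvec_eq_crossSum_of_pos {n : ℕ} {T : Fin n → Sym2 (ZMod (n + 3))}
    {f : Sym2 (ZMod (n + 3)) → ℕ} (hf : ∀ D E, f D ≠ 0 → f E ≠ 0 → ¬ Crosses D E) {l : Fin n}
    (hl : 0 < dvec T f l) : dvec T f l = crossSum f (T l) := by
  refine sum_inum_eq_crossSum f (by_contra fun hfl => ?_)
  have hneg : dvec T f l = -(f (T l) : ℤ) := sum_inum_eq_neg f fun D hfD => hf D (T l) hfD hfl
  omega

end DvecParity

open DvecParity in
theorem dvec_parity_general
    {n : ℕ} (T : Fin n → Sym2 (ZMod (n + 3)))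
    (f : Sym2 (ZMod (n + 3)) → ℕ) (hf : IsFamily f) :
    ParityCond T (dvec T f) := by
  rintro i j k ⟨u, v, w, -, -, -, hi, hj, hk⟩ hai haj hak h1 h2 h3
  rw [dvec_eq_crossSum_of_pos hf.2 hai, dvec_eq_crossSum_of_pos hf.2 haj,
    dvec_eq_crossSum_of_pos hf.2 hak, hi, hj, hk] at h1 h2 h3 ⊢
  exact even_crossSum_add_of_lt hf.2 h1 h2 h3

/-- **Theorem (Property A of `d`-vectors).**  The `d`-vector of any weighted
non-crossing family satisfies the parity condition. -/
theorem dvec_parity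
    {n : ℕ} (hn : 1 ≤ n) (T : Fin n → Sym2 (ZMod (n + 3))) (hT : IsTriangulation T)
    (f : Sym2 (ZMod (n + 3)) → ℕ) (hf : IsFamily f) :
    ParityCond T (dvec T f) :=
  dvec_parity_general T f hf
end
end

section
/- Fix n ≥ 2 and δ ∈ {0,1}^{n−1}. For every perfect matching γ of the snake graph G(δ) and every i ∈ [0,n], exactly one edge of γ belongs to Pl^{(i)}. -/
/-! Every grid edge joins the antidiagonals `x + y = k` and `x + y = k + 1`, where `k` is the
antidiagonal of its lower-left endpoint, and `Pl^{(i)}` is exactly the set of edges of `G(δ)`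
with `k = i`. Tile `t` has its lower-left corner on `x + y = t`, so `G(δ)` meets `x + y = 0` in
the single vertex `(0, 0)` and `x + y = k + 1` (for `k ≤ n - 1`) in the two middle corners of
tile `k`. If `c k` is the number of edges of a perfect matching on `x + y = k`, counting the
matched vertices of `x + y = k` gives `c (k - 1) + c k = 1, 2, 2, …, 2` for `k = 0, 1, …, n`,
and `c (-1) = 0`; hence every `c k` with `0 ≤ k ≤ n` equals `1`. -/

open scoped Classical

noncomputable section

/-- A lattice point of `ℤ²`. -/
abbrev Pt : Type := ℤ × ℤ

/-- An edge of the unit square grid: its lower-left endpoint together with a flag,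
`true` for a horizontal edge (to `p + (1,0)`), `false` for a vertical edge
(to `p + (0,1)`). -/
abbrev SEdge : Type := Pt × Bool

/-- The two endpoints of a grid edge. -/
def eEnds (e : SEdge) : Finset Pt :=
  {e.1, e.1 + (if e.2 then ((1 : ℤ), (0 : ℤ)) else ((0 : ℤ), (1 : ℤ)))}

variable (m : ℕ)

/-- Direction of the step from tile `t` to tile `t+1` (0-based tiles `0, …, m+1`,
so `n = m+2` tiles in total): `false` = the next tile is directly to the right,
`true` = directly on top.  Tile 1 is to the right of tile 0, and three consecutive
tiles are in a common row or column iff the corresponding `δ`'s differ. -/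
def sdir (δ : Fin (m + 1) → Fin 2) : ℕ → Bool
  | 0 => false
  | t + 1 =>
    if h : t + 1 ≤ m then
      (if δ ⟨t, by omega⟩ = δ ⟨t + 1, by omega⟩ then !(sdir δ t) else sdir δ t)
    else sdir δ t

/-- Lower-left corner of tile `t` of the snake graph `G(δ)`. -/
def tpos (δ : Fin (m + 1) → Fin 2) : ℕ → Pt
  | 0 => ((0 : ℤ), (0 : ℤ))
  | t + 1 => tpos δ t + (if sdir m δ t then ((0 : ℤ), (1 : ℤ)) else ((1 : ℤ), (0 : ℤ)))

/-- The four sides of the unit tile with lower-left corner `p`. -/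
def tileEdges (p : Pt) : Finset SEdge :=
  {(p, true), ((p.1, p.2 + 1), true), (p, false), ((p.1 + 1, p.2), false)}

/-- The edge set of the snake graph `G(δ)` (with `n = m+2` tiles). -/
def snakeEdges (δ : Fin (m + 1) → Fin 2) : Finset SEdge :=
  (Finset.range (m + 2)).biUnion (fun t => tileEdges (tpos m δ t))

/-- The vertex set of the snake graph `G(δ)`. -/
def snakeVerts (δ : Fin (m + 1) → Fin 2) : Finset Pt :=
  (snakeEdges m δ).biUnion eEnds

/-- `γ` is a perfect matching of the snake graph `G(δ)`: a set of edges such that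
every vertex is incident to exactly one edge of `γ`. -/
def IsPerfectMatching (δ : Fin (m + 1) → Fin 2) (γ : Finset SEdge) : Prop :=
  γ ⊆ snakeEdges m δ ∧
  ∀ v ∈ snakeVerts m δ, (γ.filter (fun e => v ∈ eEnds e)).card = 1

/-- The edge `T_i^{(i)}` (for the paper's `i ∈ [1, n-1]`, here 0-based `t = i-1`):
the bottom (resp. left) edge of tile `t+1` when tile `t+1` is to the right of
(resp. on top of) tile `t`. -/
def edgeTii (δ : Fin (m + 1) → Fin 2) (t : ℕ) : SEdge :=
  if sdir m δ t then (tpos m δ (t + 1), false) else (tpos m δ (t + 1), true)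

/-- The edge `T_{i+1}^{(i)}`: the top (resp. right) edge of tile `t` when tile `t+1`
is to the right of (resp. on top of) tile `t`. -/
def edgeTi1 (δ : Fin (m + 1) → Fin 2) (t : ℕ) : SEdge :=
  if sdir m δ t then (((tpos m δ t).1 + 1, (tpos m δ t).2), false)
  else (((tpos m δ t).1, (tpos m δ t).2 + 1), true)

/-- The edge `T_{i,i+1}`: the common edge of tiles `t` and `t+1`. -/
def edgeComm (δ : Fin (m + 1) → Fin 2) (t : ℕ) : SEdge :=
  if sdir m δ t then (tpos m δ (t + 1), true) else (tpos m δ (t + 1), false)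

/-- The three-or-two–edge sets `Pl^{(i)}`, `i ∈ [0, n]` (with `n = m+2`):
`Pl^{(0)}` consists of the bottom and left edges of the first tile; for
`i ∈ [1, n-1]`, `Pl^{(i)} = {T_{i,i+1}, T_{i+1}^{(i)}, T_i^{(i)}}`; and `Pl^{(n)}`
consists of the two edges of the last tile not in `Pl^{(n-1)}`. -/
def Pl (δ : Fin (m + 1) → Fin 2) (i : ℕ) : Finset SEdge :=
  if i = 0 then {(tpos m δ 0, true), (tpos m δ 0, false)}
  else if i ≤ m + 1 then
    {edgeComm m δ (i - 1), edgeTi1 m δ (i - 1), edgeTii m δ (i - 1)}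
  else
    {(((tpos m δ (m + 1)).1 + 1, (tpos m δ (m + 1)).2), false),
     (((tpos m δ (m + 1)).1, (tpos m δ (m + 1)).2 + 1), true)}

open Finset

def antidiag (v : Pt) : ℤ := v.1 + v.2

def midCorners (p : Pt) : Finset Pt := {p + (0, 1), p + (1, 0)}

def tileCorners (p : Pt) : Finset Pt := {p, p + (0, 1), p + (1, 0), p + (1, 1)}

lemma antidiag_of_mem_midCorners {p v : Pt} (hv : v ∈ midCorners p) :
    antidiag v = antidiag p + 1 := by
  simp only [midCorners, mem_insert, mem_singleton] at hv
  rcases hv with rfl | rfl <;> simp only [antidiag, Prod.fst_add, Prod.snd_add] <;> ring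

lemma card_midCorners (p : Pt) : #(midCorners p) = 2 := by
  simp [midCorners, Prod.ext_iff]

lemma add_one_one_mem_midCorners {p q : Pt} (hq : q ∈ midCorners p) :
    p + (1, 1) ∈ midCorners q := by
  simp only [midCorners, mem_insert, mem_singleton] at hq ⊢
  rcases hq with rfl | rfl <;> simp [Prod.ext_iff, add_assoc]

lemma mem_tileCorners_iff {p v : Pt} :
    v ∈ tileCorners p ↔ v = p ∨ v ∈ midCorners p ∨ v = p + (1, 1) := by
  simp [tileCorners, midCorners, or_assoc]

lemma biUnion_tileEdges_eEnds (p : Pt) : (tileEdges p).biUnion eEnds = tileCorners p := by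
  ext v
  simp only [tileEdges, tileCorners, eEnds, biUnion_insert, singleton_biUnion, mem_union,
    mem_insert, mem_singleton, Prod.ext_iff]
  simp only [↓reduceIte, Bool.false_eq_true, Prod.fst_add, Prod.snd_add]
  omega

lemma eq_or_antidiag_lt_of_mem_tileCorners {p v : Pt} (hv : v ∈ tileCorners p) :
    v = p ∨ antidiag p < antidiag v := by
  rcases mem_tileCorners_iff.1 hv with rfl | hv | rfl
  · exact Or.inl rfl
  · exact Or.inr (by rw [antidiag_of_mem_midCorners hv]; omega)
  · exact Or.inr (by simp only [antidiag, Prod.fst_add, Prod.snd_add]; omega)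

lemma card_filter_eEnds_antidiag (e : SEdge) (k : ℤ) :
    #((eEnds e).filter (antidiag · = k)) =
      if antidiag e.1 = k - 1 ∨ antidiag e.1 = k then 1 else 0 := by
  obtain ⟨⟨x, y⟩, b⟩ := e
  cases b <;>
    simp only [eEnds, antidiag, filter_insert, filter_singleton, ↓reduceIte, Bool.false_eq_true,
      Prod.mk_add_mk, add_zero] <;>
    split_ifs <;> simp_all <;> omega

lemma card_filter_antidiag_add_card {γ : Finset SEdge} {V : Finset Pt}
    (hends : ∀ e ∈ γ, eEnds e ⊆ V) (hcover : ∀ v ∈ V, #(γ.filter (v ∈ eEnds ·)) = 1) (k : ℤ) :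
    #(γ.filter (antidiag ·.1 = k - 1)) + #(γ.filter (antidiag ·.1 = k)) =
      #(V.filter (antidiag · = k)) := by
  have hdisj : Disjoint (γ.filter (antidiag ·.1 = k - 1)) (γ.filter (antidiag ·.1 = k)) :=
    disjoint_filter.2 fun _ _ h => by omega
  rw [← card_union_of_disjoint hdisj, ← filter_or]
  calc #(γ.filter fun e => antidiag e.1 = k - 1 ∨ antidiag e.1 = k)
      = ∑ e ∈ γ, #((V.filter (antidiag · = k)).filter (· ∈ eEnds e)) := by
        rw [card_filter]
        refine sum_congr rfl fun e he => ?_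
        rw [← card_filter_eEnds_antidiag, filter_filter]
        congr 1
        ext v
        have := @hends e he v
        simp only [mem_filter]
        tauto
    _ = ∑ v ∈ V.filter (antidiag · = k), #(γ.filter (v ∈ eEnds ·)) :=
        sum_card_bipartiteAbove_eq_sum_card_bipartiteBelow _
    _ = #(V.filter (antidiag · = k)) := by
        rw [card_eq_sum_ones]
        exact sum_congr rfl fun v hv => hcover v (mem_filter.1 hv).1

section Snake

variable (δ : Fin (m + 1) → Fin 2)

lemma tpos_succ_mem_midCorners (t : ℕ) : tpos m δ (t + 1) ∈ midCorners (tpos m δ t) := by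
  cases h : sdir m δ t <;> simp [tpos, midCorners, h]

lemma antidiag_tpos : ∀ t : ℕ, antidiag (tpos m δ t) = t
  | 0 => rfl
  | t + 1 => by
    rw [antidiag_of_mem_midCorners (tpos_succ_mem_midCorners m δ t), antidiag_tpos t]
    push_cast
    rfl

lemma mem_snakeVerts_iff {v : Pt} :
    v ∈ snakeVerts m δ ↔ ∃ s ≤ m + 1, v ∈ tileCorners (tpos m δ s) := by
  simp only [snakeVerts, snakeEdges, biUnion_biUnion, biUnion_tileEdges_eEnds, mem_biUnion,
    mem_range, Nat.lt_succ_iff]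

lemma antidiag_nonneg_of_mem_snakeVerts {v : Pt} (hv : v ∈ snakeVerts m δ) : 0 ≤ antidiag v := by
  obtain ⟨s, -, hs⟩ := (mem_snakeVerts_iff m δ).1 hv
  have := antidiag_tpos m δ s
  rcases eq_or_antidiag_lt_of_mem_tileCorners hs with rfl | h <;> omega

lemma filter_snakeVerts_antidiag_zero : (snakeVerts m δ).filter (antidiag · = 0) = {(0, 0)} := by
  ext v
  simp only [mem_filter, mem_singleton, mem_snakeVerts_iff]
  constructor
  · rintro ⟨⟨s, -, hs⟩, hv⟩
    have := antidiag_tpos m δ s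
    rcases eq_or_antidiag_lt_of_mem_tileCorners hs with rfl | h
    · obtain rfl : s = 0 := by omega
      rfl
    · omega
  · rintro rfl
    exact ⟨⟨0, by omega, by simp [tileCorners, tpos]⟩, rfl⟩

lemma filter_snakeVerts_antidiag_succ {k : ℕ} (hk : k ≤ m + 1) :
    (snakeVerts m δ).filter (antidiag · = k + 1) = midCorners (tpos m δ k) := by
  ext v
  simp only [mem_filter, mem_snakeVerts_iff]
  constructor
  · rintro ⟨⟨s, hs, hv⟩, hvk⟩
    have hts := antidiag_tpos m δ s
    rcases mem_tileCorners_iff.1 hv with rfl | hv | rfl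
    · obtain rfl : s = k + 1 := by omega
      exact tpos_succ_mem_midCorners m δ k
    · obtain rfl : s = k := by rw [antidiag_of_mem_midCorners hv] at hvk; omega
      exact hv
    · obtain rfl : k = s + 1 := by
        simp only [antidiag, Prod.fst_add, Prod.snd_add] at hvk hts; omega
      exact add_one_one_mem_midCorners (tpos_succ_mem_midCorners m δ s)
  · intro hv
    refine ⟨⟨k, hk, mem_tileCorners_iff.2 (Or.inr (Or.inl hv))⟩, ?_⟩
    rw [antidiag_of_mem_midCorners hv, antidiag_tpos]

lemma lower_mem_Pl {s : ℕ} (hs : s ≤ m + 1) (b : Bool) : (tpos m δ s, b) ∈ Pl m δ s := by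
  rcases s with _ | t
  · cases b <;> simp [Pl]
  · cases h : sdir m δ t <;> cases b <;> simp [Pl, hs, edgeComm, edgeTii, h]

lemma upper_mem_Pl {s : ℕ} (hs : s ≤ m + 1) :
    (((tpos m δ s).1, (tpos m δ s).2 + 1), true) ∈ Pl m δ (s + 1) ∧
      (((tpos m δ s).1 + 1, (tpos m δ s).2), false) ∈ Pl m δ (s + 1) := by
  rcases hs.lt_or_eq with hs | rfl
  · cases h : sdir m δ s <;>
      simp [Pl, Nat.lt_succ_iff.1 hs, edgeComm, edgeTi1, edgeTii, tpos, h, Prod.ext_iff]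
  · simp [Pl]

lemma edgeComm_fst (t : ℕ) : (edgeComm m δ t).1 = tpos m δ (t + 1) := by
  unfold edgeComm
  split_ifs <;> rfl

lemma edgeTii_fst (t : ℕ) : (edgeTii m δ t).1 = tpos m δ (t + 1) := by
  unfold edgeTii
  split_ifs <;> rfl

lemma edgeTi1_fst_mem_midCorners (t : ℕ) : (edgeTi1 m δ t).1 ∈ midCorners (tpos m δ t) := by
  unfold edgeTi1
  split_ifs <;> simp [midCorners, Prod.ext_iff]

lemma antidiag_of_mem_Pl {i : ℕ} (hi : i ≤ m + 2) {e : SEdge} (he : e ∈ Pl m δ i) :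
    antidiag e.1 = i := by
  unfold Pl at he
  split_ifs at he with h0 h1
  · subst h0
    simp only [mem_insert, mem_singleton] at he
    rcases he with rfl | rfl <;> rfl
  · obtain ⟨t, rfl⟩ : ∃ t, i = t + 1 := ⟨i - 1, by omega⟩
    simp only [Nat.add_sub_cancel, mem_insert, mem_singleton] at he
    rcases he with rfl | rfl | rfl
    · rw [edgeComm_fst, antidiag_tpos]
    · rw [antidiag_of_mem_midCorners (edgeTi1_fst_mem_midCorners m δ t), antidiag_tpos]
      push_cast
      rfl
    · rw [edgeTii_fst, antidiag_tpos]
  · obtain rfl : i = m + 2 := by omega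
    have h := antidiag_tpos m δ (m + 1)
    simp only [mem_insert, mem_singleton] at he
    rcases he with rfl | rfl <;> simp only [antidiag] at h ⊢ <;> push_cast at h ⊢ <;> omega

lemma mem_Pl_iff {i : ℕ} (hi : i ≤ m + 2) {e : SEdge} (he : e ∈ snakeEdges m δ) :
    e ∈ Pl m δ i ↔ antidiag e.1 = i := by
  refine ⟨antidiag_of_mem_Pl m δ hi, fun hei => ?_⟩
  obtain ⟨s, hs, he⟩ : ∃ s ≤ m + 1, e ∈ tileEdges (tpos m δ s) := by
    simpa [snakeEdges, Nat.lt_succ_iff] using he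
  have hts := antidiag_tpos m δ s
  simp only [tileEdges, mem_insert, mem_singleton] at he
  rcases he with rfl | rfl | rfl | rfl <;> simp only [antidiag] at hei hts
  · obtain rfl : s = i := by omega
    exact lower_mem_Pl m δ hs true
  · obtain rfl : i = s + 1 := by omega
    exact (upper_mem_Pl m δ hs).1
  · obtain rfl : s = i := by omega
    exact lower_mem_Pl m δ hs false
  · obtain rfl : i = s + 1 := by omega
    exact (upper_mem_Pl m δ hs).2

lemma IsPerfectMatching.card_filter_antidiag_eq_one {γ : Finset SEdge}
    (hγ : IsPerfectMatching m δ γ) {j : ℕ} (hj : j ≤ m + 2) :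
    #(γ.filter (antidiag ·.1 = j)) = 1 := by
  obtain ⟨hsub, hcover⟩ := hγ
  let c : ℤ → ℕ := fun k => #(γ.filter (antidiag ·.1 = k))
  have hcount : ∀ k : ℤ, c (k - 1) + c k = #((snakeVerts m δ).filter (antidiag · = k)) :=
    card_filter_antidiag_add_card (fun e he => subset_biUnion_of_mem eEnds (hsub he)) hcover
  have hneg : c (-1) = 0 := by
    have h := hcount (-1)
    rw [filter_eq_empty_iff.2 fun v hv => by
      have := antidiag_nonneg_of_mem_snakeVerts m δ hv; omega, card_empty] at h
    omega
  change c j = 1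
  induction j with
  | zero =>
    have h := hcount 0
    rw [zero_sub, filter_snakeVerts_antidiag_zero, card_singleton] at h
    simpa [hneg] using h
  | succ k ih =>
    have h := hcount (k + 1)
    rw [add_sub_cancel_right, filter_snakeVerts_antidiag_succ m δ (by omega : k ≤ m + 1),
      card_midCorners, ih (by omega)] at h
    push_cast
    omega

end Snake

/-- **Lemma (one matched edge per `Pl^{(i)}`).**  For every perfect matching `γ` of the
snake graph `G(δ)` (with `n = m+2 ≥ 2` tiles) and every `i ∈ [0, n]`, exactly one edge
of `γ` belongs to `Pl^{(i)}`. -/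
theorem perfectMatching_Pl_card
    (δ : Fin (m + 1) → Fin 2) (γ : Finset SEdge) (hγ : IsPerfectMatching m δ γ)
    (i : ℕ) (hi : i ≤ m + 2) :
    (γ.filter (fun e => e ∈ Pl m δ i)).card = 1 := by
  calc #(γ.filter (· ∈ Pl m δ i)) = #(γ.filter (antidiag ·.1 = i)) :=
        congrArg card (filter_congr fun e he => mem_Pl_iff m δ hi (hγ.1 he))
    _ = 1 := hγ.card_filter_antidiag_eq_one m δ hi
end
end

section
/- Let Q̃ be a type A quiver on {1,…,n′} whose full subquiver Q on {1,…,n} is linear. Then for every GCS s ∈ {0,1}^n and every vertex r of Q̃, the r-th coordinate of g_Q(s) lies in {−1, 0, 1}. -/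
open scoped Classical

noncomputable section

/-- Skew-symmetry: the defining property of the matrix encoding of a quiver. -/
def IsSkew {m : ℕ} (B : Matrix (Fin m) (Fin m) ℤ) : Prop := ∀ i j, B j i = -B i j

/-- The underlying (simple) graph of the quiver. -/
def underlying {m : ℕ} (B : Matrix (Fin m) (Fin m) ℤ) : SimpleGraph (Fin m) :=
  SimpleGraph.fromRel (fun i j => B i j ≠ 0)

/-- `i → j → k → i` is an oriented 3-cycle of the quiver. -/
def IsCyc3 {m : ℕ} (B : Matrix (Fin m) (Fin m) ℤ) (i j k : Fin m) : Prop :=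
  0 < B i j ∧ 0 < B j k ∧ 0 < B k i

/-- Degree of a vertex in the underlying graph. -/
def udeg {m : ℕ} (B : Matrix (Fin m) (Fin m) ℤ) (v : Fin m) : ℕ :=
  (Finset.univ.filter fun j => (underlying B).Adj v j).card

/-- The number of triangles (3-cycles of the underlying graph) containing `v`. -/
def triCount {m : ℕ} (B : Matrix (Fin m) (Fin m) ℤ) (v : Fin m) : ℕ :=
  (Finset.univ.filter fun p : Fin m × Fin m =>
    p.1 < p.2 ∧ (underlying B).Adj v p.1 ∧ (underlying B).Adj v p.2 ∧
      (underlying B).Adj p.1 p.2).card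

/-- `B` encodes a type `A` quiver: a quiver (no loops, no 2-cycles, and at most one
arrow between two vertices — a pair of parallel arrows would be a length-2 simple
cycle of the underlying multigraph) whose underlying graph is connected, all of whose
simple cycles have length 3 and are oriented, all of whose vertices have degree ≤ 4,
every degree-4 vertex lying on two triangles and every degree-3 vertex on one. -/
def IsTypeA {m : ℕ} (B : Matrix (Fin m) (Fin m) ℤ) : Prop :=
  IsSkew B ∧ (∀ i j, (B i j).natAbs ≤ 1) ∧
  (underlying B).Connected ∧
  (∀ (v : Fin m) (w : (underlying B).Walk v v), w.IsCycle → w.length = 3) ∧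
  (∀ i j k, (underlying B).Adj i j → (underlying B).Adj j k → (underlying B).Adj k i →
    IsCyc3 B i j k ∨ IsCyc3 B i k j) ∧
  (∀ v, udeg B v ≤ 4) ∧
  (∀ v, udeg B v = 4 → triCount B v = 2) ∧
  (∀ v, udeg B v = 3 → triCount B v = 1)

/-- The full subquiver of (the quiver encoded by) `B` on the first `n` vertices is
linear: exactly one arrow between consecutive vertices `i, i+1` (in either direction)
and no other arrows among the first `n` vertices. -/
def LinearOn {n' : ℕ} (B : Matrix (Fin n') (Fin n') ℤ) (n : ℕ) (hn : n ≤ n') : Prop :=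
  (∀ (i : ℕ) (h : i + 1 < n),
      B ⟨i, by omega⟩ ⟨i + 1, by omega⟩ ≠ 0) ∧
  (∀ (i j : ℕ) (hi : i < n) (hj : j < n), j ≠ i + 1 → i ≠ j + 1 →
      B ⟨i, by omega⟩ ⟨j, by omega⟩ = 0)

/-- A GCS for the linear subquiver `Q` on the first `n` vertices: `s ∈ {0,1}^n` with
`(s_i, s_j) ≠ (1, 0)` for every arrow `i → j` of `Q`. -/
def IsGCSlin {n' n : ℕ} (hn : n ≤ n') (B : Matrix (Fin n') (Fin n') ℤ)
    (s : Fin n → Bool) : Prop :=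
  ∀ i j : Fin n, 0 < B (Fin.castLE hn i) (Fin.castLE hn j) →
    ¬ (s i = true ∧ s j = false)

/-- `deg^{1→}_{Q,s}(r)`: the number of arrows `j → r` of `Q̃` with `j ∈ [1,n]` and
`s_j = 1`. -/
def deg1to {n' n : ℕ} (hn : n ≤ n') (B : Matrix (Fin n') (Fin n') ℤ)
    (s : Fin n → Bool) (r : Fin n') : ℕ :=
  ∑ j : Fin n, if s j = true then (B (Fin.castLE hn j) r).toNat else 0

/-- `deg^{0←}_{Q,s}(r)`: the number of arrows `r → j` of `Q̃` with `j ∈ [1,n]` and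
`s_j = 0`. -/
def deg0from {n' n : ℕ} (hn : n ≤ n') (B : Matrix (Fin n') (Fin n') ℤ)
    (s : Fin n → Bool) (r : Fin n') : ℕ :=
  ∑ j : Fin n, if s j = false then (B r (Fin.castLE hn j)).toNat else 0

/-- The vector `g_Q(s) ∈ ℤ^{n'}`. -/
def gQ {n' n : ℕ} (hn : n ≤ n') (B : Matrix (Fin n') (Fin n') ℤ)
    (s : Fin n → Bool) (r : Fin n') : ℤ :=
  if (r : ℕ) < n ∨ ∃ i j : Fin n, IsCyc3 B r (Fin.castLE hn i) (Fin.castLE hn j) then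
    (deg1to hn B s r : ℤ) + (deg0from hn B s r : ℤ) - 1
  else (deg1to hn B s r : ℤ) + (deg0from hn B s r : ℤ)

/-!
Each vertex `j` of `Q` contributes at most one arrow to `deg^{1→}(r) + deg^{0←}(r)`, and only
when it is a neighbour of `r`. If `r` lies on `Q`, its neighbours in `Q` are among `r ± 1`.
If `r` lies off `Q`, a path in `Q` between two of its neighbours closes up through `r` into a
cycle, which must be a triangle; so the neighbours of `r` in `Q` form a clique of the path graph,
hence there are at most two of them, and when there are two they span an oriented 3-cycle with
`r`, which is exactly when `g_Q(s)` subtracts `1`.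
-/

open Finset SimpleGraph

lemma underlying_adj {m : ℕ} (B : Matrix (Fin m) (Fin m) ℤ) (i j : Fin m) :
    (underlying B).Adj i j ↔ i ≠ j ∧ (B i j ≠ 0 ∨ B j i ≠ 0) :=
  fromRel_adj _ i j

lemma SimpleGraph.Walk.IsPath.adj_of_forall_isCycle_length_eq_three {V : Type*}
    {G : SimpleGraph V} (hcyc : ∀ (u : V) (c : G.Walk u u), c.IsCycle → c.length = 3)
    {v a b : V} {p : G.Walk a b} (hp : p.IsPath) (hv : v ∉ p.support) (hab : a ≠ b)
    (ha : G.Adj v a) (hb : G.Adj b v) : G.Adj a b := by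
  have hcycle : (Walk.cons ha (p.concat hb)).IsCycle := by
    rw [Walk.cons_isCycle_iff, Walk.edges_concat, List.concat_eq_append]
    refine ⟨hp.concat hv hb, fun hmem => ?_⟩
    rcases List.mem_append.1 hmem with hmem | hmem
    · exact hv (p.fst_mem_support_of_mem_edges hmem)
    · simp only [List.mem_singleton, Sym2.eq_iff] at hmem
      rcases hmem with ⟨rfl, -⟩ | ⟨-, rfl⟩
      · exact hv p.end_mem_support
      · exact hab rfl
  have hlen := hcyc v _ hcycle
  rw [Walk.length_cons, Walk.length_concat] at hlen
  exact Walk.adj_of_length_eq_one (p := p) (by omega)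

lemma card_filter_pathGraph_adj_le_two {n : ℕ} (k : Fin n) :
    #(univ.filter fun j => (pathGraph n).Adj j k) ≤ 2 := by
  calc #(univ.filter fun j => (pathGraph n).Adj j k)
      ≤ #({(k : ℕ) - 1, (k : ℕ) + 1} : Finset ℕ) := by
        refine card_le_card_of_injOn Fin.val (fun j hj => ?_) Fin.val_injective.injOn
        simp only [coe_filter, Set.mem_ofPred_eq, pathGraph_adj] at hj
        simp only [coe_insert, coe_singleton, Set.mem_insert_iff, Set.mem_singleton_iff]
        omega
    _ ≤ 2 := card_le_two

def lineNeighbors {n' n : ℕ} (hn : n ≤ n') (B : Matrix (Fin n') (Fin n') ℤ) (r : Fin n') :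
    Finset (Fin n) :=
  univ.filter fun j => (underlying B).Adj (Fin.castLE hn j) r

section LinearSubquiver

variable {n' n : ℕ} {hn : n ≤ n'} {B : Matrix (Fin n') (Fin n') ℤ}

def LinearOn.pathGraphEmbedding (hlin : LinearOn B n hn) : pathGraph n ↪g underlying B where
  toFun := Fin.castLE hn
  inj' := Fin.castLE_injective hn
  map_rel_iff' {i j} := by
    obtain ⟨i, hi⟩ := i
    obtain ⟨j, hj⟩ := j
    simp only [Function.Embedding.coeFn_mk, underlying_adj, pathGraph_adj, Fin.castLE_mk]
    constructor
    · rintro ⟨-, hB⟩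
      by_contra! hij
      rcases hB with hB | hB
      · exact hB (hlin.2 i j hi hj (Ne.symm hij.1) (Ne.symm hij.2))
      · exact hB (hlin.2 j i hj hi (Ne.symm hij.2) (Ne.symm hij.1))
    · rintro (rfl | rfl)
      · exact ⟨by simp, Or.inl (hlin.1 i hj)⟩
      · exact ⟨by simp, Or.inr (hlin.1 j hi)⟩

lemma LinearOn.adj_castLE_iff (hlin : LinearOn B n hn) {i j : Fin n} :
    (underlying B).Adj (Fin.castLE hn i) (Fin.castLE hn j) ↔ (pathGraph n).Adj i j :=
  hlin.pathGraphEmbedding.map_adj_iff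

lemma card_lineNeighbors_le_two_of_lt (hlin : LinearOn B n hn) {r : Fin n'} (hr : (r : ℕ) < n) :
    #(lineNeighbors hn B r) ≤ 2 := by
  have hr' : r = Fin.castLE hn ⟨r, hr⟩ := rfl
  rw [lineNeighbors, hr']
  simp only [hlin.adj_castLE_iff]
  exact card_filter_pathGraph_adj_le_two _

lemma LinearOn.pathGraph_adj_of_common_neighbor (hlin : LinearOn B n hn)
    (hcyc : ∀ (u : Fin n') (c : (underlying B).Walk u u), c.IsCycle → c.length = 3)
    {r : Fin n'} (hr : n ≤ (r : ℕ)) {i j : Fin n} (hij : i ≠ j)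
    (hi : (underlying B).Adj (Fin.castLE hn i) r) (hj : (underlying B).Adj (Fin.castLE hn j) r) :
    (pathGraph n).Adj i j := by
  obtain ⟨p, hp⟩ := (pathGraph_preconnected n i j).some.toPath
  let f := hlin.pathGraphEmbedding
  have hr_notMem : r ∉ (p.map f.toHom).support := by
    simp only [Walk.support_map, List.mem_map, not_exists, not_and]
    rintro x - rfl
    exact absurd x.2 (not_lt.2 hr)
  rw [← hlin.adj_castLE_iff]
  exact (hp.map f.injective).adj_of_forall_isCycle_length_eq_three hcyc hr_notMem
    (f.injective.ne hij) hi.symm hj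

lemma card_lineNeighbors_le_two_of_le (hlin : LinearOn B n hn)
    (hcyc : ∀ (u : Fin n') (c : (underlying B).Walk u u), c.IsCycle → c.length = 3)
    {r : Fin n'} (hr : n ≤ (r : ℕ)) : #(lineNeighbors hn B r) ≤ 2 := by
  have hclique : (pathGraph n).IsClique (lineNeighbors hn B r : Set (Fin n)) :=
    fun i hi j hj hij => hlin.pathGraph_adj_of_common_neighbor hcyc hr hij
      (mem_filter.1 hi).2 (mem_filter.1 hj).2
  simpa using hclique.card_le_of_coloring (pathGraph.bicoloring n)

lemma exists_isCyc3_of_one_lt_card_lineNeighbors (hlin : LinearOn B n hn)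
    (hcyc : ∀ (u : Fin n') (c : (underlying B).Walk u u), c.IsCycle → c.length = 3)
    (horient : ∀ i j k, (underlying B).Adj i j → (underlying B).Adj j k →
      (underlying B).Adj k i → IsCyc3 B i j k ∨ IsCyc3 B i k j)
    {r : Fin n'} (hr : n ≤ (r : ℕ)) (hcard : 1 < #(lineNeighbors hn B r)) :
    ∃ i j : Fin n, IsCyc3 B r (Fin.castLE hn i) (Fin.castLE hn j) := by
  obtain ⟨i, hi, j, hj, hij⟩ := one_lt_card.1 hcard
  have hri := (mem_filter.1 hi).2
  have hrj := (mem_filter.1 hj).2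
  have hadj := hlin.adj_castLE_iff.2 (hlin.pathGraph_adj_of_common_neighbor hcyc hr hij hri hrj)
  rcases horient r _ _ hri.symm hadj hrj with h | h
  exacts [⟨i, j, h⟩, ⟨j, i, h⟩]

lemma deg1to_add_deg0from_le_card_lineNeighbors (hskew : IsSkew B)
    (habs : ∀ i j, (B i j).natAbs ≤ 1) (s : Fin n → Bool) (r : Fin n') :
    deg1to hn B s r + deg0from hn B s r ≤ #(lineNeighbors hn B r) := by
  rw [deg1to, deg0from, ← sum_add_distrib, lineNeighbors, card_filter]
  refine sum_le_sum fun j _ => ?_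
  have hanti : B r (Fin.castLE hn j) = -B (Fin.castLE hn j) r := hskew _ _
  by_cases hadj : (underlying B).Adj (Fin.castLE hn j) r
  · have := habs (Fin.castLE hn j) r
    rw [if_pos hadj]
    cases s j <;>
      simp only [Bool.false_eq_true, Bool.true_eq_false, ↓reduceIte, zero_add, add_zero,
        Int.toNat_le, Nat.cast_one] <;> omega
  · have hzero : B (Fin.castLE hn j) r = 0 := by
      rw [underlying_adj] at hadj
      by_cases heq : Fin.castLE hn j = r
      · have := hskew r r
        rw [heq]; omega
      · by_contra h
        exact hadj ⟨heq, Or.inl h⟩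
    simp [hadj, hzero, hanti]

end LinearSubquiver

theorem gQ_coords_in_pm_one_general
    {n' n : ℕ} (hn : n ≤ n')
    (B : Matrix (Fin n') (Fin n') ℤ) (hA : IsTypeA B) (hlin : LinearOn B n hn)
    (s : Fin n → Bool) (r : Fin n') :
    gQ hn B s r = -1 ∨ gQ hn B s r = 0 ∨ gQ hn B s r = 1 := by
  obtain ⟨hskew, habs, -, hcyc, horient, -⟩ := hA
  have hdeg := deg1to_add_deg0from_le_card_lineNeighbors (hn := hn) hskew habs s r
  unfold gQ
  by_cases hr : (r : ℕ) < n
  · have hcard := card_lineNeighbors_le_two_of_lt hlin hr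
    rw [if_pos (Or.inl hr)]
    omega
  · have hcard := card_lineNeighbors_le_two_of_le hlin hcyc (not_lt.1 hr)
    split_ifs with hcond
    · omega
    · have hle_one : ¬ 1 < #(lineNeighbors hn B r) := fun h =>
        hcond (Or.inr (exists_isCyc3_of_one_lt_card_lineNeighbors hlin hcyc horient
          (not_lt.1 hr) h))
      omega

/-- **Theorem.**  For a type `A` quiver `Q̃` whose full subquiver on the first `n`
vertices is linear, every coordinate of `g_Q(s)` lies in `{-1, 0, 1}` for every
GCS `s`. -/
theorem gQ_coords_in_pm_one
    {n' n : ℕ} (hpos : 1 ≤ n) (hn : n ≤ n')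
    (B : Matrix (Fin n') (Fin n') ℤ) (hA : IsTypeA B) (hlin : LinearOn B n hn)
    (s : Fin n → Bool) (hs : IsGCSlin hn B s) (r : Fin n') :
    gQ hn B s r = -1 ∨ gQ hn B s r = 0 ∨ gQ hn B s r = 1 :=
  gQ_coords_in_pm_one_general hn B hA hlin s r

end
end
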